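/- For any artin algebra A one has Fin-inj A ≤ del A, i.e. the big finitistic injective dimension of A is at most the delooping level of A. -/

import Mathlib

open CategoryTheory CategoryTheory.Limits

noncomputable section

namespace ArtinAlg

variable (A : Type) [Ring A]

/-- `M` admits a projective resolution of length at most `n`. -/
inductive ProjDimLE : ℕ → ModuleCat.{0} A → Prop
  | zero (M : ModuleCat.{0} A) (h : Projective M) : ProjDimLE 0 M
  | succ (n : ℕ) (M P : ModuleCat.{0} A) (f : P ⟶ M) (hP : Projective P) (hf : Epi f)
      (h : ProjDimLE n (kernel f)) : ProjDimLE (n + 1) M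

/-- `M` admits an injective coresolution of length at most `n`. -/
inductive InjDimLE : ℕ → ModuleCat.{0} A → Prop
  | zero (M : ModuleCat.{0} A) (h : Injective M) : InjDimLE 0 M
  | succ (n : ℕ) (M I : ModuleCat.{0} A) (f : M ⟶ I) (hI : Injective I) (hf : Mono f)
      (h : InjDimLE n (cokernel f)) : InjDimLE (n + 1) M

/-- The projective dimension `pd M ∈ ℕ∞`. -/
def projDim (M : ModuleCat.{0} A) : ℕ∞ :=
  sInf {d : ℕ∞ | ∃ n : ℕ, d = n ∧ ProjDimLE A n M}

/-- The injective dimension `id M ∈ ℕ∞`. -/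
def injDim (M : ModuleCat.{0} A) : ℕ∞ :=
  sInf {d : ℕ∞ | ∃ n : ℕ, d = n ∧ InjDimLE A n M}

/-- `f : P ⟶ M` is a projective cover: `P` is projective and `f` is an essential
(superfluous) epimorphism. -/
def IsProjectiveCoverHom {P M : ModuleCat.{0} A} (f : P ⟶ M) : Prop :=
  Projective P ∧ Epi f ∧ ∀ (N : ModuleCat.{0} A) (g : N ⟶ P), Epi (g ≫ f) → Epi g

/-- `P` is a projective cover of `M`. -/
def IsProjCoverOf (M P : ModuleCat.{0} A) : Prop :=
  ∃ f : P ⟶ M, IsProjectiveCoverHom A f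

/-- `f : M ⟶ I` is an injective envelope: `I` is injective and `f` is an essential
monomorphism. -/
def IsInjectiveEnvelopeHom {M I : ModuleCat.{0} A} (f : M ⟶ I) : Prop :=
  Injective I ∧ Mono f ∧ ∀ (N : ModuleCat.{0} A) (g : I ⟶ N), Mono (f ≫ g) → Mono g

/-- `I` is an injective envelope of `M`. -/
def IsInjEnvOf (M I : ModuleCat.{0} A) : Prop :=
  ∃ f : M ⟶ I, IsInjectiveEnvelopeHom A f

/-- `X ≅ Ω M`, the kernel of a projective cover of `M`. -/
def IsSyzygyOf (M X : ModuleCat.{0} A) : Prop :=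
  ∃ (P : ModuleCat.{0} A) (f : P ⟶ M), IsProjectiveCoverHom A f ∧ Nonempty (X ≅ kernel f)

/-- `X ≅ Σ M`, the cokernel of an injective envelope of `M`. -/
def IsCosyzygyOf (M X : ModuleCat.{0} A) : Prop :=
  ∃ (I : ModuleCat.{0} A) (f : M ⟶ I), IsInjectiveEnvelopeHom A f ∧ Nonempty (X ≅ cokernel f)

/-- `X ≅ Ω^n M`. -/
def IsNthSyzygy : ℕ → ModuleCat.{0} A → ModuleCat.{0} A → Prop
  | 0, M, X => Nonempty (X ≅ M)
  | n + 1, M, X => ∃ Y, IsSyzygyOf A M Y ∧ IsNthSyzygy n Y X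

/-- `X ≅ Σ^n M`. -/
def IsNthCosyzygy : ℕ → ModuleCat.{0} A → ModuleCat.{0} A → Prop
  | 0, M, X => Nonempty (X ≅ M)
  | n + 1, M, X => ∃ Y, IsCosyzygyOf A M Y ∧ IsNthCosyzygy n Y X

/-- `X` is a direct summand of `Y`. -/
def IsDirectSummandOf (X Y : ModuleCat.{0} A) : Prop :=
  ∃ (i : X ⟶ Y) (r : Y ⟶ X), i ≫ r = 𝟙 X

/-- `X ∈ add W` : `X` is a direct summand of a finite direct sum of copies of `W`. -/
def InAdd (X W : ModuleCat.{0} A) : Prop :=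
  ∃ n : ℕ, IsDirectSummandOf A X (ModuleCat.of A (Fin n → ↥W))

/-- The delooping level of `M` is at most `d` :
`Ω^d M ∈ add (A ⊕ Ω^{d+1} M')` for some finitely generated `M'`. -/
def DelLE (d : ℕ) (M : ModuleCat.{0} A) : Prop :=
  ∃ X, IsNthSyzygy A d M X ∧
    ∃ M' : ModuleCat.{0} A, Module.Finite A ↥M' ∧
      ∃ X', IsNthSyzygy A (d + 1) M' X' ∧ InAdd A X (ModuleCat.of A (A × ↥X'))

/-- The delooping level `del M ∈ ℕ∞`. -/
def delLevel (M : ModuleCat.{0} A) : ℕ∞ :=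
  sInf {d : ℕ∞ | ∃ n : ℕ, d = n ∧ DelLE A n M}

/-- The delooping level of the algebra: the supremum of `del S` over the simple modules. -/
def delAlg : ℕ∞ :=
  sSup {d : ℕ∞ | ∃ S : ModuleCat.{0} A, IsSimpleModule A ↥S ∧ delLevel A S = d}

/-- `Q` is a minimal injective cogenerator: the injective envelope of the direct sum of
a complete set of representatives of the simple modules. -/
def IsMinimalInjectiveCogenerator (Q : ModuleCat.{0} A) : Prop :=
  ∃ (ι : Type) (_ : Fintype ι) (S : ι → ModuleCat.{0} A),
    (∀ i, IsSimpleModule A ↥(S i)) ∧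
    (∀ T : ModuleCat.{0} A, IsSimpleModule A ↥T → ∃! i, Nonempty (↥T ≃ₗ[A] ↥(S i))) ∧
    IsInjEnvOf A (ModuleCat.of A (∀ i, ↥(S i))) Q

/-- The desuspending level of `M` is at most `d` :
`Σ^d M ∈ add (D(A) ⊕ Σ^{d+1} M')` for some finitely generated `M'`. -/
def DesLE (d : ℕ) (M : ModuleCat.{0} A) : Prop :=
  ∃ X, IsNthCosyzygy A d M X ∧
    ∃ Q, IsMinimalInjectiveCogenerator A Q ∧
      ∃ M' : ModuleCat.{0} A, Module.Finite A ↥M' ∧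
        ∃ X', IsNthCosyzygy A (d + 1) M' X' ∧ InAdd A X (ModuleCat.of A (↥Q × ↥X'))

/-- The desuspending level `des M ∈ ℕ∞`. -/
def desLevel (M : ModuleCat.{0} A) : ℕ∞ :=
  sInf {d : ℕ∞ | ∃ n : ℕ, d = n ∧ DesLE A n M}

/-- The desuspending level of the algebra. -/
def desAlg : ℕ∞ :=
  sSup {d : ℕ∞ | ∃ S : ModuleCat.{0} A, IsSimpleModule A ↥S ∧ desLevel A S = d}

/-- The (small) finitistic projective dimension `fin-pro A`. -/
def finProDim : ℕ∞ :=
  sSup {d : ℕ∞ | ∃ M : ModuleCat.{0} A, Module.Finite A ↥M ∧ projDim A M = d ∧ d ≠ ⊤}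

/-- The (small) finitistic injective dimension `fin-inj A`. -/
def finInjDim : ℕ∞ :=
  sSup {d : ℕ∞ | ∃ M : ModuleCat.{0} A, Module.Finite A ↥M ∧ injDim A M = d ∧ d ≠ ⊤}

/-- The big finitistic projective dimension `Fin-pro A`. -/
def bigFinProDim : ℕ∞ :=
  sSup {d : ℕ∞ | ∃ M : ModuleCat.{0} A, projDim A M = d ∧ d ≠ ⊤}

/-- The big finitistic injective dimension `Fin-inj A`. -/
def bigFinInjDim : ℕ∞ :=
  sSup {d : ℕ∞ | ∃ M : ModuleCat.{0} A, injDim A M = d ∧ d ≠ ⊤}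

/-- `M` is an indecomposable nonzero module. -/
def Indec (M : ModuleCat.{0} A) : Prop :=
  Nontrivial ↥M ∧ ∀ (N₁ N₂ : Submodule A ↥M), IsCompl N₁ N₂ → N₁ = ⊥ ∨ N₂ = ⊥

/-- `M` is serial (uniserial): its submodules form a chain. -/
def IsUniserial (M : ModuleCat.{0} A) : Prop :=
  ∀ N₁ N₂ : Submodule A ↥M, N₁ ≤ N₂ ∨ N₂ ≤ N₁

/-- `A` is a Nakayama algebra: all finitely generated indecomposable modules are serial. -/
def IsNakayama : Prop :=
  ∀ M : ModuleCat.{0} A, Module.Finite A ↥M → Indec A M → IsUniserial A M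

/-- `A` is connected: it is not a nontrivial product of algebras. -/
def IsConnectedAlgebra : Prop :=
  Nontrivial A ∧ ∀ e : A, IsIdempotentElem e → e ∈ Set.center A → e = 0 ∨ e = 1

/-- `A` is a cyclic Nakayama algebra: connected Nakayama with no simple projective module. -/
def IsCyclicNakayama : Prop :=
  IsNakayama A ∧ IsConnectedAlgebra A ∧
    ¬ ∃ S : ModuleCat.{0} A, IsSimpleModule A ↥S ∧ Projective S

/-- `T ≅ top M` (and `top M` is simple): there is an essential epimorphism `M ⟶ T`. -/
def IsSimpleTopOf (M T : ModuleCat.{0} A) : Prop :=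
  IsSimpleModule A ↥T ∧
    ∃ f : M ⟶ T, Epi f ∧ ∀ (N : ModuleCat.{0} A) (g : N ⟶ M), Epi (g ≫ f) → Epi g

/-- `S ≅ soc M` (and `soc M` is simple): there is an essential monomorphism `S ⟶ M`. -/
def IsSimpleSocOf (M S : ModuleCat.{0} A) : Prop :=
  IsSimpleModule A ↥S ∧
    ∃ f : S ⟶ M, Mono f ∧ ∀ (N : ModuleCat.{0} A) (g : M ⟶ N), Mono (f ≫ g) → Mono g

/-- `0 ⟶ N ⟶ E ⟶ M ⟶ 0` is an almost split (Auslander-Reiten) sequence. -/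
def IsAlmostSplitSeq {N E M : ModuleCat.{0} A} (f : N ⟶ E) (g : E ⟶ M) : Prop :=
  Mono f ∧ Epi g ∧ (∃ w : f ≫ g = 0, (ShortComplex.mk f g w).Exact) ∧
  (¬ ∃ s : M ⟶ E, s ≫ g = 𝟙 M) ∧ Indec A N ∧ Indec A M ∧
  ∀ (X : ModuleCat.{0} A) (h : X ⟶ M), (¬ ∃ s : M ⟶ X, s ≫ h = 𝟙 M) → ∃ h' : X ⟶ E, h' ≫ g = h

/-- `N ≅ τ M`, the Auslander-Reiten translate of `M` : there is an almost split sequence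
`0 ⟶ N ⟶ E ⟶ M ⟶ 0`. -/
def IsTauOf (N M : ModuleCat.{0} A) : Prop :=
  ∃ (E : ModuleCat.{0} A) (f : N ⟶ E) (g : E ⟶ M), IsAlmostSplitSeq A f g

/-- `U ≅ ψ S = τ⁻ top (I S)`. -/
def IsPsiOf (S U : ModuleCat.{0} A) : Prop :=
  ∃ I, IsInjEnvOf A S I ∧ ∃ T, IsSimpleTopOf A I T ∧ IsTauOf A T U

/-- `T ≅ γ S = τ soc (P S)`. -/
def IsGammaOf (S T : ModuleCat.{0} A) : Prop :=
  ∃ P, IsProjCoverOf A S P ∧ ∃ U, IsSimpleSocOf A P U ∧ IsTauOf A T U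

/-- `T ≅ φ S = top (I S)`. -/
def IsPhiOf (S T : ModuleCat.{0} A) : Prop :=
  ∃ I, IsInjEnvOf A S I ∧ IsSimpleTopOf A I T

/-- There is a `ψ`-path `(S_1, …, S_m)` of cardinality `m` ending in `S`. -/
def PsiPathTo (m : ℕ) (S : ModuleCat.{0} A) : Prop :=
  1 ≤ m ∧ ∃ c : ℕ → ModuleCat.{0} A,
    (∀ i < m, IsSimpleModule A ↥(c i)) ∧
    (∀ i, i + 1 < m → IsPsiOf A (c i) (c (i + 1))) ∧
    Nonempty (c (m - 1) ≅ S)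

/-- `a(S)`: the supremum of the cardinalities of `ψ`-paths ending in `S`. -/
def aVal (S : ModuleCat.{0} A) : ℕ∞ :=
  sSup {d : ℕ∞ | ∃ m : ℕ, d = m ∧ PsiPathTo A m S}

/-- `a(A)`: the maximum of `a(S)` over the simple modules which are not `ψ`-cyclic. -/
def aAlg : ℕ∞ :=
  sSup {d : ℕ∞ | ∃ S : ModuleCat.{0} A, IsSimpleModule A ↥S ∧ aVal A S ≠ ⊤ ∧ aVal A S = d}

/-- `S` is a composition factor of `M`: a simple subquotient of `M`. -/
def IsCompFactorOf (S M : ModuleCat.{0} A) : Prop :=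
  IsSimpleModule A ↥S ∧ ∃ N' N : Submodule A ↥M, N' ≤ N ∧
    Nonempty ((↥N ⧸ N'.comap N.subtype) ≃ₗ[A] ↥S)

/-- `e(S) = min {pd S, pd (I S)} = x`. -/
def ERelVal (S : ModuleCat.{0} A) (x : ℕ∞) : Prop :=
  ∃ I, IsInjEnvOf A S I ∧ x = min (projDim A S) (projDim A I)

/-- `e*(S) = min {id S, id (P S)} = x`. -/
def EStarVal (S : ModuleCat.{0} A) (x : ℕ∞) : Prop :=
  ∃ P, IsProjCoverOf A S P ∧ x = min (injDim A S) (injDim A P)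

/-- `T = h(S) = top (Ω^{e(S)} N S)`, the homological permutation. -/
def HRel (S T : ModuleCat.{0} A) : Prop :=
  IsSimpleModule A ↥S ∧ IsSimpleModule A ↥T ∧
  ∃ z : ℕ, ERelVal A S z ∧
    ∃ N, ((Odd z ∧ N = S) ∨ (Even z ∧ IsInjEnvOf A S N)) ∧
      ∃ X, IsNthSyzygy A z N X ∧ IsSimpleTopOf A X T

/-- `S = h*(T) = soc (Σ^{e*(T)} N* T)`, the inverse homological permutation. -/
def HStarRel (T S : ModuleCat.{0} A) : Prop :=
  IsSimpleModule A ↥T ∧ IsSimpleModule A ↥S ∧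
  ∃ z : ℕ, EStarVal A T z ∧
    ∃ N, ((Odd z ∧ N = T) ∨ (Even z ∧ IsProjCoverOf A T N)) ∧
      ∃ X, IsNthCosyzygy A z N X ∧ IsSimpleSocOf A X S

/-- The `t`-fold relational iterate of a relation on modules (up to isomorphism). -/
def IterRel (r : ModuleCat.{0} A → ModuleCat.{0} A → Prop) :
    ℕ → ModuleCat.{0} A → ModuleCat.{0} A → Prop
  | 0, X, Y => Nonempty (X ≅ Y)
  | n + 1, X, Y => ∃ Z, r X Z ∧ IterRel r n Z Y

end ArtinAlg


/-!
Write `Ext¹(S, C) = 0` as "every extension of `S` by `C` splits". Suppose `id M = m + 1` and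
`del A ≤ m`, and let `V` be an `m`-th cosyzygy of `M`, so `id V ≤ 1`. For a simple `S` with
`Ω^e S ∈ add (A ⊕ Ω^{e+1} M')` and `e ≤ m`, the `(m - e)`-th cosyzygy `U` of `M` has
`id U ≤ e + 1` and `V` as its `e`-th cosyzygy. Dimension shifting gives
`Ext¹(Ω^{e+1} M', U) = Ext^{e+2}(M', U) = 0`, hence `Ext¹(Ω^e S, U) = 0`, and shifting back,
`Ext¹(S, V) = Ext^{e+1}(S, U) = 0`. Over an artinian ring, `Ext¹(S, V) = 0` for all simple `S`
makes `V` injective (Baer's criterion, extending across one simple layer at a time), so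
`id M ≤ m`.
-/

section ExactLift

variable {A X Y Z N : Type} [Ring A] [AddCommGroup X] [Module A X] [AddCommGroup Y] [Module A Y]
  [AddCommGroup Z] [Module A Z] [AddCommGroup N] [Module A N]

theorem Function.Exact.exists_comp_eq_of_surjective {i : X →ₗ[A] Y} {p : Y →ₗ[A] Z}
    (hex : Function.Exact i p) (hp : Function.Surjective p) {g : Y →ₗ[A] N} (hg : g ∘ₗ i = 0) :
    ∃ h : Z →ₗ[A] N, h ∘ₗ p = g := by
  refine ⟨(LinearMap.range i).liftQ g ?_ ∘ₗ (hex.linearEquivOfSurjective hp).symm.toLinearMap, ?_⟩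
  · rintro _ ⟨x, rfl⟩
    exact LinearMap.congr_fun hg x
  · ext y
    simp

theorem Function.Exact.exists_comp_eq_of_injective {i : X →ₗ[A] Y} {p : Y →ₗ[A] Z}
    (hex : Function.Exact i p) (hi : Function.Injective i) {g : N →ₗ[A] Y} (hg : p ∘ₗ g = 0) :
    ∃ h : N →ₗ[A] X, i ∘ₗ h = g :=
  ⟨(LinearEquiv.ofInjective i hi).symm.toLinearMap ∘ₗ
      g.codRestrict (LinearMap.range i) fun n => (hex _).mp (LinearMap.congr_fun hg n),
    LinearMap.ext fun _ => LinearEquiv.ofInjective_symm_apply (h := hi) _ _⟩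

end ExactLift

namespace ArtinAlg

section ExtOne

variable (A : Type) [Ring A]

/-- `Ext¹(S, C) = 0`, in the form: every extension of `S` by `C` splits. -/
def ExtOneVanishes (S C : Type) [AddCommGroup S] [Module A S] [AddCommGroup C] [Module A C] :
    Prop :=
  ∀ (E : Type) [AddCommGroup E] [Module A E] (i : C →ₗ[A] E) (p : E →ₗ[A] S),
    Function.Injective i → Function.Surjective p → Function.Exact i p →
    ∃ s : S →ₗ[A] E, p ∘ₗ s = LinearMap.id

variable {A} {X Y Z C E : Type}
  [AddCommGroup X] [Module A X] [AddCommGroup Y] [Module A Y] [AddCommGroup Z] [Module A Z]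
  [AddCommGroup C] [Module A C] [AddCommGroup E] [Module A E]

namespace ExtOneVanishes

theorem exists_lift {S : Type} [AddCommGroup S] [Module A S] (h : ExtOneVanishes A Z C)
    {i : C →ₗ[A] E} {p : E →ₗ[A] S} (hi : Function.Injective i) (hp : Function.Surjective p)
    (hex : Function.Exact i p) (f : Z →ₗ[A] S) : ∃ t : Z →ₗ[A] E, p ∘ₗ t = f := by
  -- split the pullback `0 → C → D → Z → 0` of the given extension along `f`
  let D := LinearMap.ker (p ∘ₗ LinearMap.fst A E Z - f ∘ₗ LinearMap.snd A E Z)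
  have mem_D (x : E × Z) : x ∈ D ↔ p x.1 = f x.2 := by simp [D, sub_eq_zero]
  let iD : C →ₗ[A] D := (LinearMap.inl A E Z ∘ₗ i).codRestrict D fun c =>
    (mem_D _).2 (by simp [hex.apply_apply_eq_zero])
  let pD : D →ₗ[A] Z := LinearMap.snd A E Z ∘ₗ D.subtype
  have hiD : Function.Injective iD := fun c c' hcc' =>
    hi (congrArg (fun x : D => (x : E × Z).1) hcc')
  have hpD : Function.Surjective pD := fun z => by
    obtain ⟨e, he⟩ := hp (f z)
    exact ⟨⟨(e, z), (mem_D _).2 he⟩, rfl⟩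
  have hexD : Function.Exact iD pD := by
    rintro ⟨⟨e, z⟩, hx⟩
    simp only [pD, LinearMap.coe_comp, Function.comp_apply, Submodule.coe_subtype,
      LinearMap.snd_apply]
    constructor
    · rintro rfl
      obtain ⟨c, rfl⟩ := (hex e).mp (by simpa using (mem_D _).1 hx)
      exact ⟨c, rfl⟩
    · rintro ⟨c, hc⟩
      exact (congrArg (fun x : D => (x : E × Z).2) hc).symm
  obtain ⟨s, hs⟩ := h D iD pD hiD hpD hexD
  refine ⟨LinearMap.fst A E Z ∘ₗ D.subtype ∘ₗ s, LinearMap.ext fun z => ?_⟩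
  have hsz : ((s z : D) : E × Z).2 = z := LinearMap.congr_fun hs z
  simpa [hsz] using (mem_D _).1 (s z).2

theorem exists_extend (h : ExtOneVanishes A Z C) {ι : X →ₗ[A] Y} {p : Y →ₗ[A] Z}
    (hι : Function.Injective ι) (hp : Function.Surjective p) (hex : Function.Exact ι p)
    (φ : X →ₗ[A] C) : ∃ ψ : Y →ₗ[A] C, ψ ∘ₗ ι = φ := by
  -- retract the pushout `0 → C → (C × Y) / X → Z → 0` of the given extension along `φ`
  let W := LinearMap.range (φ.prod (-ι))
  let j : C →ₗ[A] (C × Y) ⧸ W := W.mkQ ∘ₗ LinearMap.inl A C Y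
  let π : (C × Y) ⧸ W →ₗ[A] Z := W.liftQ (p ∘ₗ LinearMap.snd A C Y) <| by
    rintro _ ⟨x, rfl⟩
    simp [hex.apply_apply_eq_zero]
  have mk_eq (c : C) (x : X) : W.mkQ (c, ι x) = j (c + φ x) := by
    simp only [j, LinearMap.comp_apply, Submodule.mkQ_apply, LinearMap.inl_apply]
    exact (Submodule.Quotient.eq W).2 ⟨-x, by simp⟩
  have hj : Function.Injective j := by
    refine (injective_iff_map_eq_zero j).2 fun c hc => ?_
    obtain ⟨x, hx⟩ := (Submodule.Quotient.mk_eq_zero W).1 hc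
    have hx0 : x = 0 := hι (by simpa using congrArg Prod.snd hx)
    simpa [hx0] using (congrArg Prod.fst hx).symm
  have hπ : Function.Surjective π := fun z => by
    obtain ⟨y, rfl⟩ := hp z
    exact ⟨W.mkQ (0, y), rfl⟩
  have hexW : Function.Exact j π := by
    intro e
    obtain ⟨⟨c, y⟩, rfl⟩ := W.mkQ_surjective e
    constructor
    · intro hy
      obtain ⟨x, rfl⟩ := (hex y).mp hy
      exact ⟨c + φ x, (mk_eq c x).symm⟩
    · rintro ⟨c', hc'⟩
      rw [← hc']
      simp [j, π]
  obtain ⟨r, hr⟩ := ((hexW.split_tfae hj hπ).out 0 1).mp (h _ j π hj hπ hexW)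
  refine ⟨r ∘ₗ W.mkQ ∘ₗ LinearMap.inr A C Y, LinearMap.ext fun x => ?_⟩
  have := mk_eq 0 x
  rw [zero_add] at this
  simpa [this] using LinearMap.congr_fun hr (φ x)

theorem of_retract (h : ExtOneVanishes A Y C) (i : X →ₗ[A] Y) (r : Y →ₗ[A] X)
    (hri : r ∘ₗ i = LinearMap.id) : ExtOneVanishes A X C := by
  intro E _ _ j p hj hp hex
  obtain ⟨t, ht⟩ := h.exists_lift hj hp hex r
  exact ⟨t ∘ₗ i, by rw [← LinearMap.comp_assoc, ht, hri]⟩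

theorem congr_left (e : X ≃ₗ[A] Y) : ExtOneVanishes A X C ↔ ExtOneVanishes A Y C :=
  ⟨fun h => h.of_retract e.symm.toLinearMap e.toLinearMap (by ext; simp),
    fun h => h.of_retract e.toLinearMap e.symm.toLinearMap (by ext; simp)⟩

theorem of_projective [Module.Projective A X] : ExtOneVanishes A X C :=
  fun _ _ _ _ p _ hp _ => Module.projective_lifting_property p LinearMap.id hp

theorem of_injective [Module.Injective A C] : ExtOneVanishes A X C :=
  fun E _ _ i _ hi hp hex => ((hex.split_tfae hi hp).out 0 1).mpr
    (Module.Injective.extension_property A C C E i hi LinearMap.id)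

theorem prod (hX : ExtOneVanishes A X C) (hY : ExtOneVanishes A Y C) :
    ExtOneVanishes A (X × Y) C := by
  intro E _ _ i p hi hp hex
  obtain ⟨t₁, ht₁⟩ := hX.exists_lift hi hp hex (LinearMap.inl A X Y)
  obtain ⟨t₂, ht₂⟩ := hY.exists_lift hi hp hex (LinearMap.inr A X Y)
  exact ⟨t₁.coprod t₂, by rw [LinearMap.comp_coprod, ht₁, ht₂, LinearMap.coprod_inl_inr]⟩

theorem pi {ι : Type} [Finite ι] {W : ι → Type} [∀ k, AddCommGroup (W k)]
    [∀ k, Module A (W k)] (h : ∀ k, ExtOneVanishes A (W k) C) :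
    ExtOneVanishes A (∀ k, W k) C := by
  classical
  have := Fintype.ofFinite ι
  intro E _ _ i p hi hp hex
  choose t ht using fun k => (h k).exists_lift hi hp hex (LinearMap.single A W k)
  refine ⟨∑ k, t k ∘ₗ LinearMap.proj k, LinearMap.ext fun w => ?_⟩
  simp [← LinearMap.comp_apply, ht, Finset.univ_sum_single]

end ExtOneVanishes

variable {P M I Y' : Type} [AddCommGroup P] [Module A P] [AddCommGroup M] [Module A M]
  [AddCommGroup I] [Module A I] [AddCommGroup Y'] [Module A Y']

/-- Dimension shifting: `Ext¹(X, Y) ≅ Ext²(M, Y) ≅ Ext¹(M, Y')`. -/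
theorem extOneVanishes_iff_of_exact [Module.Projective A P] [Module.Injective A I]
    {ι : X →ₗ[A] P} {p : P →ₗ[A] M} (hι : Function.Injective ι) (hp : Function.Surjective p)
    (hιp : Function.Exact ι p) {j : Y →ₗ[A] I} {π : I →ₗ[A] Y'} (hj : Function.Injective j)
    (hπ : Function.Surjective π) (hjπ : Function.Exact j π) :
    ExtOneVanishes A X Y ↔ ExtOneVanishes A M Y' := by
  constructor
  · intro h E _ _ i q hi hq hex
    obtain ⟨g, hg⟩ := Module.projective_lifting_property q p hq
    obtain ⟨φ, hφ⟩ := hex.exists_comp_eq_of_injective hi (g := g ∘ₗ ι) <| by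
      rw [← LinearMap.comp_assoc, hg, hιp.linearMap_comp_eq_zero]
    obtain ⟨t, ht⟩ := h.exists_lift hj hπ hjπ φ
    obtain ⟨t', ht'⟩ := Module.Injective.extension_property A I X P ι hι t
    obtain ⟨s, hs⟩ := hιp.exists_comp_eq_of_surjective hp (g := g - i ∘ₗ π ∘ₗ t') <| by
      rw [LinearMap.sub_comp, LinearMap.comp_assoc, LinearMap.comp_assoc, ht', ht, hφ, sub_self]
    refine ⟨s, (LinearMap.cancel_right hp).1 ?_⟩
    rw [LinearMap.comp_assoc, hs, LinearMap.comp_sub, hg, ← LinearMap.comp_assoc,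
      hex.linearMap_comp_eq_zero, LinearMap.zero_comp, sub_zero, LinearMap.id_comp]
  · intro h E _ _ i q hi hq hex
    obtain ⟨g, hg⟩ := Module.Injective.extension_property A I Y E i hi j
    obtain ⟨φ, hφ⟩ := hex.exists_comp_eq_of_surjective hq (g := π ∘ₗ g) <| by
      rw [LinearMap.comp_assoc, hg, hjπ.linearMap_comp_eq_zero]
    obtain ⟨ψ, hψ⟩ := h.exists_extend hι hp hιp φ
    obtain ⟨ψ', hψ'⟩ := Module.projective_lifting_property π ψ hπ
    obtain ⟨u, hu⟩ := hjπ.exists_comp_eq_of_injective hj (g := g - ψ' ∘ₗ ι ∘ₗ q) <| by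
      rw [LinearMap.comp_sub, ← LinearMap.comp_assoc, hψ', ← LinearMap.comp_assoc, hψ, hφ,
        sub_self]
    have hret : u ∘ₗ i = LinearMap.id := LinearMap.ext fun y => hj <| by
      show j (u (i y)) = j y
      have := LinearMap.congr_fun hu (i y)
      simp only [LinearMap.comp_apply, LinearMap.sub_apply] at this
      rw [this, ← LinearMap.comp_apply g i, hg, hex.apply_apply_eq_zero]
      simp
    exact ((hex.split_tfae hi hq).out 0 1).mpr (⟨u, hret⟩ : ∃ r, r ∘ₗ i = LinearMap.id)

theorem injective_of_extOneVanishes_simple [IsArtinianRing A]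
    (h : ∀ S : ModuleCat.{0} A, IsSimpleModule A S → ExtOneVanishes A S C) :
    Module.Injective A C := by
  refine Module.Baer.injective fun L f => ?_
  obtain ⟨J, ⟨hLJ, g, hg⟩, hmax⟩ := exists_maximal_of_wellFoundedGT
    (fun J : Ideal A => ∃ hLJ : L ≤ J, ∃ g : J →ₗ[A] C, g ∘ₗ Submodule.inclusion hLJ = f)
    ⟨L, le_rfl, f, rfl⟩
  -- otherwise `g` extends to an ideal `J'` covering `J`, since `J' / J` is simple
  obtain rfl : J = ⊤ := by
    by_contra hJ
    obtain ⟨J', hJJ', -⟩ := exists_covBy_le_of_lt (lt_top_iff_ne_top.2 hJ)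
    have hexact : Function.Exact (Submodule.inclusion hJJ'.le)
        (Submodule.comap J'.subtype J).mkQ :=
      LinearMap.exact_iff.2 (by rw [Submodule.ker_mkQ, Submodule.range_inclusion])
    obtain ⟨g', hg'⟩ :=
      (h (ModuleCat.of A _) ((covBy_iff_quot_is_simple hJJ'.le).1 hJJ')).exists_extend
        (Submodule.inclusion_injective hJJ'.le) (Submodule.mkQ_surjective _) hexact g
    refine hJJ'.lt.not_ge (hmax ⟨hLJ.trans hJJ'.le, g', ?_⟩ hJJ'.le)
    rw [← hg, ← hg']
    rfl
  exact ⟨g ∘ₗ Submodule.topEquiv.symm.toLinearMap, fun x hx => LinearMap.congr_fun hg ⟨x, hx⟩⟩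

end ExtOne

section Coresolutions

variable {A : Type} [Ring A]

theorem IsSyzygyOf.exists_exact {M X : ModuleCat.{0} A} (h : IsSyzygyOf A M X) :
    ∃ (P : ModuleCat.{0} A) (ι : X →ₗ[A] P) (p : P →ₗ[A] M), Module.Projective A P ∧
      Function.Injective ι ∧ Function.Surjective p ∧ Function.Exact ι p := by
  obtain ⟨P, f, ⟨hP, hf, -⟩, ⟨e⟩⟩ := h
  refine ⟨P, (kernel.ι f).hom ∘ₗ e.toLinearEquiv.toLinearMap, f.hom,
    (IsProjective.iff_projective P).2 hP,
    ((ModuleCat.mono_iff_injective (kernel.ι f)).1 inferInstance).comp e.toLinearEquiv.injective,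
    (ModuleCat.epi_iff_surjective f).1 hf, ?_⟩
  exact LinearEquiv.precomp_exact_iff_exact.2
    ((ShortComplex.ShortExact.moduleCat_exact_iff_function_exact _).1
      (ShortComplex.kernelSequence_exact f))

theorem extOneVanishes_iff_of_isSyzygyOf {M X U I : ModuleCat.{0} A} (hX : IsSyzygyOf A M X)
    (f : U ⟶ I) [Mono f] (hI : Injective I) :
    ExtOneVanishes A X U ↔ ExtOneVanishes A M ↥(cokernel f) := by
  obtain ⟨P, ι, p, hP, hι, hp, hιp⟩ := hX.exists_exact
  have : Module.Injective A I := (Module.injective_iff_injective_object A I).2 hI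
  exact extOneVanishes_iff_of_exact hι hp hιp ((ModuleCat.mono_iff_injective f).1 inferInstance)
    ((ModuleCat.epi_iff_surjective (cokernel.π f)).1 inferInstance)
    ((ShortComplex.ShortExact.moduleCat_exact_iff_function_exact _).1
      (ShortComplex.cokernelSequence_exact f))

/-- `V` is an `n`-th cosyzygy of `Y` in some, not necessarily minimal, injective coresolution. -/
inductive IsInjCosyzygy : ℕ → ModuleCat.{0} A → ModuleCat.{0} A → Prop
  | refl (Y : ModuleCat.{0} A) : IsInjCosyzygy 0 Y Y
  | snoc {n : ℕ} {Y U I : ModuleCat.{0} A} (h : IsInjCosyzygy n Y U) (f : U ⟶ I) (hf : Mono f)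
      (hI : Injective I) : IsInjCosyzygy (n + 1) Y (cokernel f)

theorem InjDimLE.exists_isInjCosyzygy (n : ℕ) {k : ℕ} {Y : ModuleCat.{0} A}
    (h : InjDimLE A (n + k) Y) : ∃ V, IsInjCosyzygy n Y V ∧ InjDimLE A k V := by
  induction n generalizing k with
  | zero => exact ⟨Y, .refl Y, by simpa using h⟩
  | succ n ih =>
    obtain ⟨V, hYV, hV⟩ := ih (k := k + 1) (by rwa [← add_assoc, add_right_comm])
    cases hV with
    | succ _ _ I f hI hf hV => exact ⟨cokernel f, hYV.snoc f hf hI, hV⟩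

theorem IsInjCosyzygy.injDimLE_add {n k : ℕ} {Y V : ModuleCat.{0} A} (h : IsInjCosyzygy n Y V)
    (hV : InjDimLE A k V) : InjDimLE A (n + k) Y := by
  induction h generalizing k with
  | refl => simpa using hV
  | snoc _ f hf hI ih =>
    rw [add_right_comm, add_assoc]
    exact ih (.succ k _ _ f hI hf hV)

theorem IsInjCosyzygy.exists_of_add {a b : ℕ} {Y V : ModuleCat.{0} A}
    (h : IsInjCosyzygy (a + b) Y V) : ∃ U, IsInjCosyzygy a Y U ∧ IsInjCosyzygy b U V := by
  induction b generalizing V with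
  | zero => exact ⟨V, h, .refl V⟩
  | succ b ih =>
    cases h with
    | snoc h f hf hI =>
      obtain ⟨U, hYU, hUV⟩ := ih h
      exact ⟨U, hYU, hUV.snoc f hf hI⟩

/-- Both sides say `Ext^{n+1}(M, Y) = 0`. -/
theorem extOneVanishes_iff_of_isNthSyzygy {n : ℕ} {M X Y V : ModuleCat.{0} A}
    (hX : IsNthSyzygy A n M X) (hYV : IsInjCosyzygy n Y V) :
    ExtOneVanishes A X Y ↔ ExtOneVanishes A M V := by
  induction n generalizing M V with
  | zero =>
    cases hYV
    exact ExtOneVanishes.congr_left hX.some.toLinearEquiv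
  | succ n ih =>
    obtain ⟨M', hM', hX⟩ := hX
    cases hYV with
    | snoc hYU f hf hI => exact (ih hX hYU).trans (extOneVanishes_iff_of_isSyzygyOf hM' f hI)

theorem extOneVanishes_of_isNthSyzygy_of_injDimLE {n : ℕ} {M X Y : ModuleCat.{0} A}
    (hX : IsNthSyzygy A n M X) (hY : InjDimLE A n Y) : ExtOneVanishes A X Y := by
  obtain ⟨W, hYW, hW⟩ := InjDimLE.exists_isInjCosyzygy n (k := 0) hY
  cases hW with
  | zero _ hW =>
    have : Module.Injective A W := (Module.injective_iff_injective_object A W).2 hW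
    exact (extOneVanishes_iff_of_isNthSyzygy hX hYW).2 .of_injective

theorem ExtOneVanishes.of_inAdd {X W : ModuleCat.{0} A} {C : Type} [AddCommGroup C] [Module A C]
    (hX : InAdd A X W) (hW : ExtOneVanishes A W C) : ExtOneVanishes A X C := by
  obtain ⟨n, i, r, hri⟩ := hX
  exact (ExtOneVanishes.pi fun _ : Fin n => hW).of_retract i.hom r.hom
    (congrArg ModuleCat.Hom.hom hri)

theorem extOneVanishes_of_delLE {e : ℕ} {S U V : ModuleCat.{0} A} (hS : DelLE A e S)
    (hUV : IsInjCosyzygy e U V) (hU : InjDimLE A (e + 1) U) : ExtOneVanishes A S V := by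
  obtain ⟨X, hX, M', -, X', hX', hadd⟩ := hS
  have hX'U : ExtOneVanishes A X' U := extOneVanishes_of_isNthSyzygy_of_injDimLE hX' hU
  have hXU : ExtOneVanishes A X U := (ExtOneVanishes.of_projective.prod hX'U).of_inAdd hadd
  exact (extOneVanishes_iff_of_isNthSyzygy hX hUV).1 hXU

theorem injDimLE_of_succ [IsArtinianRing A] {m : ℕ}
    (hdel : ∀ S : ModuleCat.{0} A, IsSimpleModule A S → ∃ e ≤ m, DelLE A e S)
    {Y : ModuleCat.{0} A} (hY : InjDimLE A (m + 1) Y) : InjDimLE A m Y := by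
  obtain ⟨V, hYV, hV⟩ := InjDimLE.exists_isInjCosyzygy m hY
  have hVinj : Module.Injective A V := injective_of_extOneVanishes_simple fun S hS => by
    obtain ⟨e, he, hSe⟩ := hdel S hS
    obtain ⟨U, -, hUV⟩ := IsInjCosyzygy.exists_of_add (a := m - e) (b := e)
      (by rwa [Nat.sub_add_cancel he])
    exact extOneVanishes_of_delLE hSe hUV (hUV.injDimLE_add hV)
  exact hYV.injDimLE_add (.zero V ((Module.injective_iff_injective_object A V).1 hVinj))

end Coresolutions

variable {A : Type} [Ring A]

theorem exists_eq_sInf_of_ne_top {p : ℕ → Prop}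
    (h : sInf {d : ℕ∞ | ∃ n : ℕ, d = n ∧ p n} ≠ ⊤) :
    ∃ n : ℕ, sInf {d : ℕ∞ | ∃ n : ℕ, d = n ∧ p n} = n ∧ p n :=
  csInf_mem (s := {d : ℕ∞ | ∃ n : ℕ, d = n ∧ p n})
    (Set.nonempty_iff_ne_empty.2 fun he => h (by rw [he, sInf_empty]))

theorem exists_delLE_of_delAlg_le {m : ℕ} (hA : delAlg A ≤ m) {S : ModuleCat.{0} A}
    (hS : IsSimpleModule A S) : ∃ e ≤ m, DelLE A e S := by
  have hSA : delLevel A S ≤ delAlg A := le_sSup ⟨S, hS, rfl⟩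
  have hSm : delLevel A S ≤ m := hSA.trans hA
  obtain ⟨e, he, hSe⟩ := exists_eq_sInf_of_ne_top (ne_top_of_le_ne_top (ENat.natCast_ne_top m) hSm)
  exact ⟨e, by rwa [delLevel, he, Nat.cast_le] at hSm, hSe⟩

theorem injDim_le_delAlg [IsArtinianRing A] {M : ModuleCat.{0} A} (hM : injDim A M ≠ ⊤) :
    injDim A M ≤ delAlg A := by
  obtain ⟨n, hn, hMn⟩ := exists_eq_sInf_of_ne_top hM
  rw [injDim, hn]
  by_contra! hlt
  obtain ⟨m, rfl⟩ : ∃ m, n = m + 1 :=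
    Nat.exists_eq_add_one.2 (Nat.pos_of_ne_zero (by rintro rfl; simp at hlt))
  have hm : delAlg A ≤ m := by
    rwa [Nat.cast_add, Nat.cast_one, ENat.lt_add_one_iff (ENat.natCast_ne_top m)] at hlt
  have hle : injDim A M ≤ m :=
    sInf_le ⟨m, rfl, injDimLE_of_succ (fun S hS => exists_delLE_of_delAlg_le hm hS) hMn⟩
  rw [injDim, hn, Nat.cast_le] at hle
  omega

end ArtinAlg

open ArtinAlg in
/-- For any artin algebra `A` one has `Fin-inj A ≤ del A`: the big
finitistic injective dimension of `A` is at most the delooping level of `A`. -/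
theorem statement_1 (R : Type) [CommRing R] [IsArtinianRing R]
    (A : Type) [Ring A] [Algebra R A] [Module.Finite R A] :
    bigFinInjDim A ≤ delAlg A := by
  have : IsArtinianRing A := isArtinian_of_tower R isArtinian_of_fg_of_artinian'
  refine sSup_le ?_
  rintro _ ⟨M, rfl, hM⟩
  exact injDim_le_delAlg hM
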